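/- arXiv:2509.16263 — 2 statements merged into one kernel-verified Lean document; each statement's English description precedes it below -/
import Mathlib

section
/- Let m ≥ 1 and let 𝓜_m(w,x) be the (m+1)×(m+1) real symmetric tridiagonal matrix with diagonal entries -(m-j)·w for j = 0,…,m and off-diagonal entries (subdiagonal and superdiagonal) at position (j, j+1) equal to -(x/2)·√((j+1)(m-j)). Then the spectrum of 𝓜_m(w,x) is exactly { -s·w + m_s·√(w² + x²) : m_s ∈ {-s, -s+1, …, s} } where s = m/2; in particular its least eigenvalue is -s(w + √(w²+x²)). -/
open Polynomial

noncomputable def dickeLop (n : ℕ) (w x : ℝ) (p : Polynomial ℝ) : Polynomial ℝ :=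
  -(C w) * ((n : ℝ) • p - X * derivative p)
  - C (x/2) * ((n : ℝ) • (X * p) - X^2 * derivative p + derivative p)

lemma dickeLop_mul (n₁ n₂ : ℕ) (w x : ℝ) (p q : Polynomial ℝ) :
    dickeLop (n₁ + n₂) w x (p * q)
      = dickeLop n₁ w x p * q + p * dickeLop n₂ w x q := by
  simp only [dickeLop, derivative_mul, Nat.cast_add, smul_eq_C_mul, C_add]
  ring

lemma dickeLop_pow (n : ℕ) (w x lam : ℝ) (q : Polynomial ℝ)
    (h : dickeLop 1 w x q = C lam * q) :
    dickeLop n w x (q ^ n) = C ((n : ℝ) * lam) * (q ^ n) := by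
  induction n with
  | zero => simp [dickeLop]
  | succ n ih =>
      have hq : q ^ (n+1) = q * q ^ n := by ring
      rw [hq]
      have h2 := dickeLop_mul 1 n w x q (q ^ n)
      rw [show 1 + n = n + 1 by omega] at h2
      rw [h2, h, ih]
      push_cast
      simp only [C_add, C_mul, C_1]
      ring

lemma dickeLop_linear (w x lam a b : ℝ)
    (h1 : -(x/2) * b = lam * a) (h2 : -w * b - (x/2) * a = lam * b) :
    dickeLop 1 w x (C a * X + C b) = C lam * (C a * X + C b) := by
  have hE : dickeLop 1 w x (C a * X + C b)
      = C (-(x/2) * b) * X + C (-w * b - (x/2) * a) := by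
    simp only [dickeLop, derivative_add, derivative_C_mul, derivative_X, derivative_C,
      mul_one, add_zero, Nat.cast_one, one_smul, C_sub, C_mul, C_neg]
    ring
  rw [hE, h1, h2, C_mul, C_mul]
  ring

lemma dickeLop_coeff (n : ℕ) (w x : ℝ) (p : Polynomial ℝ) (k : ℕ) :
    (dickeLop n w x p).coeff k
      = -((n:ℝ) - (k:ℝ)) * w * p.coeff k
        - (x/2) * ((k:ℝ)+1) * p.coeff (k+1)
        - (x/2) * (if k = 0 then 0 else ((n:ℝ) - ((k:ℝ)-1)) * p.coeff (k-1)) := by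
  have hX2 : ∀ (q : Polynomial ℝ) (d : ℕ), (X^2 * q).coeff d = if 2 ≤ d then q.coeff (d-2) else 0 :=
    fun q d => coeff_X_pow_mul' q 2 d
  match k with
  | 0 =>
      simp [dickeLop, coeff_derivative, mul_coeff_zero, hX2]
      ring
  | 1 =>
      simp [dickeLop, coeff_derivative, coeff_X_mul, hX2]
      ring
  | (k+2) =>
      simp only [dickeLop, coeff_sub, coeff_add, coeff_neg, coeff_C_mul, coeff_smul,
        coeff_X_mul, coeff_derivative, hX2, smul_eq_mul]
      norm_num
      simp only [coeff_derivative]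
      push_cast
      ring

noncomputable def dickeD (m k : ℕ) : ℝ := Real.sqrt (k.factorial * (m-k).factorial)

lemma dickeD_pos (m k : ℕ) : 0 < dickeD m k := by
  apply Real.sqrt_pos.2
  positivity

lemma sqrt_helper (c y : ℝ) (hc : 0 ≤ c) : c * Real.sqrt y = Real.sqrt (c^2 * y) := by
  rw [Real.sqrt_mul (by positivity), Real.sqrt_sq hc]

lemma dickeD_succ (m k : ℕ) (h : k + 1 ≤ m) :
    Real.sqrt (((k:ℝ)+1) * ((m:ℝ)-(k:ℝ))) * dickeD m (k+1) = ((k:ℝ)+1) * dickeD m k := by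
  obtain ⟨t, rfl⟩ : ∃ t, m = k + 1 + t := ⟨m - (k+1), by omega⟩
  have hc : ((k+1+t : ℕ):ℝ) - (k:ℝ) = (t:ℝ)+1 := by push_cast; ring
  unfold dickeD
  rw [hc, show k+1+t-(k+1) = t by omega, show k+1+t-k = t+1 by omega,
    ← Real.sqrt_mul (by positivity), sqrt_helper _ _ (by positivity)]
  congr 1
  push_cast [Nat.factorial_succ]
  ring

lemma dickeD_pred (m k : ℕ) (h1 : 1 ≤ k) (h2 : k ≤ m) :
    Real.sqrt ((k:ℝ) * (((m:ℝ)-(k:ℝ))+1)) * dickeD m (k-1) = (((m:ℝ)-(k:ℝ))+1) * dickeD m k := by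
  obtain ⟨s, rfl⟩ : ∃ s, k = s + 1 := ⟨k - 1, by omega⟩
  obtain ⟨t, rfl⟩ : ∃ t, m = s + 1 + t := ⟨m - (s+1), by omega⟩
  have hc : ((s+1+t : ℕ):ℝ) - ((s+1:ℕ):ℝ) + 1 = (t:ℝ)+1 := by push_cast; ring
  unfold dickeD
  rw [hc, show s+1-1 = s by omega, show s+1+t-s = t+1 by omega, show s+1+t-(s+1) = t by omega,
    ← Real.sqrt_mul (by positivity), sqrt_helper _ _ (by positivity)]
  congr 1
  push_cast [Nat.factorial_succ]
  ring

lemma linear_ne_zero' (a b : ℝ) (hab : a ≠ 0 ∨ b ≠ 0) : (C a * X + C b : Polynomial ℝ) ≠ 0 := by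
  intro h
  rcases hab with ha | hb
  · have := congrArg (fun q => coeff q 1) h
    simp at this
    exact ha this
  · have := congrArg (fun q => coeff q 0) h
    simp at this
    exact hb this

lemma dicke_poly (m : ℕ) (w x lamp lamm a b : ℝ)
    (hab : a ≠ 0 ∨ b ≠ 0)
    (hp1 : -(x/2) * b = lamp * a) (hp2 : -w * b - (x/2) * a = lamp * b)
    (hm1 : -(x/2) * a = lamm * (-b)) (hm2 : -w * a - (x/2) * (-b) = lamm * a)
    (j : ℕ) (hj : j ≤ m) :
    ∃ p : Polynomial ℝ, p ≠ 0 ∧ p.natDegree ≤ m ∧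
      dickeLop m w x p = C ((j:ℝ) * lamp + ((m-j:ℕ):ℝ) * lamm) * p := by
  set qp : Polynomial ℝ := C a * X + C b with hqp
  set qm : Polynomial ℝ := C (-b) * X + C a with hqm
  have hqp0 : qp ≠ 0 := linear_ne_zero' a b hab
  have hqm0 : qm ≠ 0 := linear_ne_zero' (-b) a (by rcases hab with ha | hb; exacts [Or.inr ha, Or.inl (neg_ne_zero.2 hb)])
  refine ⟨qp ^ j * qm ^ (m - j), mul_ne_zero (pow_ne_zero _ hqp0) (pow_ne_zero _ hqm0), ?_, ?_⟩
  · refine natDegree_mul_le.trans ?_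
    have h1 : (qp ^ j).natDegree ≤ j * 1 := natDegree_pow_le.trans (by
      exact Nat.mul_le_mul_left _ natDegree_linear_le)
    have h2 : (qm ^ (m-j)).natDegree ≤ (m-j) * 1 := natDegree_pow_le.trans (by
      exact Nat.mul_le_mul_left _ natDegree_linear_le)
    omega
  · have hsum : j + (m - j) = m := by omega
    have hmul := dickeLop_mul j (m-j) w x (qp ^ j) (qm ^ (m-j))
    rw [hsum] at hmul
    rw [hmul, dickeLop_pow j w x lamp qp (dickeLop_linear w x lamp a b hp1 hp2),
      dickeLop_pow (m-j) w x lamm qm (dickeLop_linear w x lamm (-b) a hm1 hm2),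
      C_add, C_mul, C_mul]
    ring

noncomputable def dickeM (m : ℕ) (w x : ℝ) : Matrix (Fin (m+1)) (Fin (m+1)) ℝ :=
  Matrix.of fun j k =>
    if j = k then -((m : ℝ) - (j : ℕ)) * w
    else if (k : ℕ) = (j : ℕ) + 1 then
      -(x/2) * Real.sqrt (((j : ℕ) + 1) * ((m : ℝ) - (j : ℕ)))
    else if (j : ℕ) = (k : ℕ) + 1 then
      -(x/2) * Real.sqrt (((k : ℕ) + 1) * ((m : ℝ) - (k : ℕ)))
    else 0


lemma dicke_eigen_exists (m : ℕ) (w x μ : ℝ) (p : Polynomial ℝ) (hp : p ≠ 0)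
    (hdeg : p.natDegree ≤ m) (hL : dickeLop m w x p = C μ * p) :
    ∃ v : Fin (m+1) → ℝ, v ≠ 0 ∧ (dickeM m w x).mulVec v = μ • v := by
  refine ⟨fun k => dickeD m k * p.coeff k, ?_, ?_⟩
  · intro h
    have h0 := congr_fun h ⟨p.natDegree, by omega⟩
    simp only [Pi.zero_apply] at h0
    have := mul_eq_zero.1 h0
    rcases this with h' | h'
    · exact absurd h' (ne_of_gt (dickeD_pos m _))
    · exact hp (leadingCoeff_eq_zero.1 h')
  · have hR : ∀ n : ℕ,
        -((m:ℝ) - (n:ℝ)) * w * p.coeff n - (x/2) * ((n:ℝ)+1) * p.coeff (n+1)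
          - (x/2) * (if n = 0 then 0 else ((m:ℝ) - ((n:ℝ)-1)) * p.coeff (n-1))
        = μ * p.coeff n := by
      intro n
      have := congrArg (fun q => q.coeff n) hL
      simpa only [dickeLop_coeff, coeff_C_mul] using this
    funext k
    show ∑ j, dickeM m w x k j * (dickeD m j * p.coeff j) = μ • (dickeD m k * p.coeff k)
    have hsplit : ∀ j : Fin (m+1), dickeM m w x k j * (dickeD m j * p.coeff j)
        = (if j = k then (-((m:ℝ)-(k:ℕ)) * w) * (dickeD m k * p.coeff k) else 0)
        + (if (j:ℕ) = (k:ℕ)+1 then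
            (-(x/2) * Real.sqrt (((k:ℕ)+1) * ((m:ℝ)-(k:ℕ)))) * (dickeD m j * p.coeff j) else 0)
        + (if (j:ℕ)+1 = (k:ℕ) then
            (-(x/2) * Real.sqrt (((j:ℕ)+1) * ((m:ℝ)-(j:ℕ)))) * (dickeD m j * p.coeff j) else 0) := by
      intro j
      simp only [dickeM, Matrix.of_apply]
      by_cases h1 : k = j
      · subst h1
        have c2 : ¬((k:ℕ) = (k:ℕ)+1) := by omega
        have c3 : ¬((k:ℕ)+1 = (k:ℕ)) := by omega
        rw [if_pos rfl, if_pos rfl, if_neg c2, if_neg c3]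
        ring
      · have h1' : ¬ (j = k) := fun h => h1 h.symm
        rw [if_neg h1, if_neg h1']
        by_cases h2 : (j:ℕ) = (k:ℕ)+1
        · have c3 : ¬((j:ℕ)+1 = (k:ℕ)) := by omega
          rw [if_pos h2, if_pos h2, if_neg c3]
          ring
        · by_cases h3 : (j:ℕ)+1 = (k:ℕ)
          · have h3' : (k:ℕ) = (j:ℕ)+1 := h3.symm
            rw [if_neg h2, if_neg h2, if_pos h3', if_pos h3]
            ring
          · have h3' : ¬((k:ℕ) = (j:ℕ)+1) := fun h => h3 h.symm
            rw [if_neg h2, if_neg h2, if_neg h3', if_neg h3]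
            ring
    rw [Finset.sum_congr rfl (fun j _ => hsplit j)]
    rw [Finset.sum_add_distrib, Finset.sum_add_distrib]
    have hkm : (k:ℕ) ≤ m := by omega
    have S1 : (∑ j : Fin (m+1), if j = k then (-((m:ℝ)-(k:ℕ)) * w) * (dickeD m k * p.coeff k) else 0)
        = (-((m:ℝ)-(k:ℕ)) * w) * (dickeD m k * p.coeff k) := by
      rw [Finset.sum_ite_eq' Finset.univ k]
      simp
    rw [S1]
    by_cases hup : (k:ℕ)+1 ≤ m
    · have S2 : (∑ j : Fin (m+1), if (j:ℕ) = (k:ℕ)+1 then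
            (-(x/2) * Real.sqrt (((k:ℕ)+1) * ((m:ℝ)-(k:ℕ)))) * (dickeD m j * p.coeff j) else 0)
          = (-(x/2) * Real.sqrt (((k:ℕ)+1) * ((m:ℝ)-(k:ℕ)))) * (dickeD m ((k:ℕ)+1) * p.coeff ((k:ℕ)+1)) := by
        rw [Finset.sum_eq_single (⟨(k:ℕ)+1, by omega⟩ : Fin (m+1))]
        · simp
        · intro b _ hb
          rw [if_neg]
          intro hc
          exact hb (Fin.ext (by simpa using hc))
        · intro h
          exact absurd (Finset.mem_univ _) h
      rw [S2]
      have hs2 := dickeD_succ m (k:ℕ) hup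
      by_cases hdn : 1 ≤ (k:ℕ)
      · have hc : ((((k:ℕ)-1:ℕ)):ℝ) = ((k:ℕ):ℝ)-1 := by
          push_cast [Nat.cast_sub hdn]
          ring
        have S3 : (∑ j : Fin (m+1), if (j:ℕ)+1 = (k:ℕ) then
              (-(x/2) * Real.sqrt (((j:ℕ)+1) * ((m:ℝ)-(j:ℕ)))) * (dickeD m j * p.coeff j) else 0)
            = (-(x/2) * Real.sqrt (((k:ℕ):ℝ) * (((m:ℝ)-((k:ℕ):ℝ))+1))) * (dickeD m ((k:ℕ)-1) * p.coeff ((k:ℕ)-1)) := by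
          rw [Finset.sum_eq_single (⟨(k:ℕ)-1, by omega⟩ : Fin (m+1))]
          · rw [if_pos (by simp; omega)]
            simp only [Fin.val_mk]
            rw [hc, show (((k:ℕ):ℝ)-1+1) * ((m:ℝ)-(((k:ℕ):ℝ)-1))
                = ((k:ℕ):ℝ) * (((m:ℝ)-((k:ℕ):ℝ))+1) from by ring]
          · intro b _ hb
            rw [if_neg]
            intro hcc
            exact hb (Fin.ext (by simp; omega))
          · intro h
            exact absurd (Finset.mem_univ _) h
        rw [S3]
        have hs3 := dickeD_pred m (k:ℕ) hdn hkm
        have hRk := hR (k:ℕ)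
        rw [if_neg (by omega : ¬((k:ℕ) = 0))] at hRk
        show _ = μ * (dickeD m (k:ℕ) * p.coeff (k:ℕ))
        linear_combination (dickeD m (k:ℕ)) * hRk
          + (-(x/2) * p.coeff ((k:ℕ)+1)) * hs2
          + (-(x/2) * p.coeff ((k:ℕ)-1)) * hs3
      · have hk0 : (k:ℕ) = 0 := by omega
        have S3 : (∑ j : Fin (m+1), if (j:ℕ)+1 = (k:ℕ) then
              (-(x/2) * Real.sqrt (((j:ℕ)+1) * ((m:ℝ)-(j:ℕ)))) * (dickeD m j * p.coeff j) else 0)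
            = 0 := by
          apply Finset.sum_eq_zero
          intro j _
          rw [if_neg (by omega)]
        rw [S3]
        have hRk := hR (k:ℕ)
        rw [if_pos hk0] at hRk
        show _ = μ * (dickeD m (k:ℕ) * p.coeff (k:ℕ))
        linear_combination (dickeD m (k:ℕ)) * hRk
          + (-(x/2) * p.coeff ((k:ℕ)+1)) * hs2
    · have hkm' : (k:ℕ) = m := by omega
      have S2 : (∑ j : Fin (m+1), if (j:ℕ) = (k:ℕ)+1 then
            (-(x/2) * Real.sqrt (((k:ℕ)+1) * ((m:ℝ)-(k:ℕ)))) * (dickeD m j * p.coeff j) else 0)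
          = 0 := by
        apply Finset.sum_eq_zero
        intro j _
        rw [if_neg (by omega)]
      rw [S2]
      have hcz : p.coeff ((k:ℕ)+1) = 0 :=
        Polynomial.coeff_eq_zero_of_natDegree_lt (by omega)
      by_cases hdn : 1 ≤ (k:ℕ)
      · have hc : ((((k:ℕ)-1:ℕ)):ℝ) = ((k:ℕ):ℝ)-1 := by
          push_cast [Nat.cast_sub hdn]
          ring
        have S3 : (∑ j : Fin (m+1), if (j:ℕ)+1 = (k:ℕ) then
              (-(x/2) * Real.sqrt (((j:ℕ)+1) * ((m:ℝ)-(j:ℕ)))) * (dickeD m j * p.coeff j) else 0)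
            = (-(x/2) * Real.sqrt (((k:ℕ):ℝ) * (((m:ℝ)-((k:ℕ):ℝ))+1))) * (dickeD m ((k:ℕ)-1) * p.coeff ((k:ℕ)-1)) := by
          rw [Finset.sum_eq_single (⟨(k:ℕ)-1, by omega⟩ : Fin (m+1))]
          · rw [if_pos (by simp; omega)]
            simp only [Fin.val_mk]
            rw [hc, show (((k:ℕ):ℝ)-1+1) * ((m:ℝ)-(((k:ℕ):ℝ)-1))
                = ((k:ℕ):ℝ) * (((m:ℝ)-((k:ℕ):ℝ))+1) from by ring]
          · intro b _ hb
            rw [if_neg]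
            intro hcc
            exact hb (Fin.ext (by simp; omega))
          · intro h
            exact absurd (Finset.mem_univ _) h
        rw [S3]
        have hs3 := dickeD_pred m (k:ℕ) hdn hkm
        have hRk := hR (k:ℕ)
        rw [if_neg (by omega : ¬((k:ℕ) = 0))] at hRk
        show _ = μ * (dickeD m (k:ℕ) * p.coeff (k:ℕ))
        linear_combination (dickeD m (k:ℕ)) * hRk
          + ((x/2) * (dickeD m (k:ℕ)) * (((k:ℕ):ℝ)+1)) * hcz
          + (-(x/2) * p.coeff ((k:ℕ)-1)) * hs3
      · have hk0 : (k:ℕ) = 0 := by omega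
        have S3 : (∑ j : Fin (m+1), if (j:ℕ)+1 = (k:ℕ) then
              (-(x/2) * Real.sqrt (((j:ℕ)+1) * ((m:ℝ)-(j:ℕ)))) * (dickeD m j * p.coeff j) else 0)
            = 0 := by
          apply Finset.sum_eq_zero
          intro j _
          rw [if_neg (by omega)]
        rw [S3]
        have hRk := hR (k:ℕ)
        rw [if_pos hk0] at hRk
        show _ = μ * (dickeD m (k:ℕ) * p.coeff (k:ℕ))
        linear_combination (dickeD m (k:ℕ)) * hRk
          + ((x/2) * (dickeD m (k:ℕ)) * (((k:ℕ):ℝ)+1)) * hcz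

open Matrix in
/-- The `(m+1)×(m+1)` symmetric tridiagonal matrix `𝓜_m(w,x)` with diagonal entries
`-(m-j)·w` and off-diagonal entries `-(x/2)·√((j+1)(m-j))` at positions `(j, j+1)`
(and symmetrically) has spectrum exactly `{ -s·w + m_s·√(w²+x²) : m_s = -s, …, s }`
with `s = m/2`; in particular its least eigenvalue is `-s(w + √(w²+x²))`. -/
theorem dicke_tridiagonal_spectrum (m : ℕ) (hm : 1 ≤ m) (w x : ℝ) :
    let M : Matrix (Fin (m+1)) (Fin (m+1)) ℝ :=
      Matrix.of fun j k =>
        if j = k then -((m : ℝ) - (j : ℕ)) * w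
        else if (k : ℕ) = (j : ℕ) + 1 then
          -(x/2) * Real.sqrt (((j : ℕ) + 1) * ((m : ℝ) - (j : ℕ)))
        else if (j : ℕ) = (k : ℕ) + 1 then
          -(x/2) * Real.sqrt (((k : ℕ) + 1) * ((m : ℝ) - (k : ℕ)))
        else 0
    let s : ℝ := (m : ℝ) / 2
    ({μ : ℝ | ∃ v : Fin (m+1) → ℝ, v ≠ 0 ∧ M.mulVec v = μ • v}
        = {μ : ℝ | ∃ j : Fin (m+1), μ = -s * w + ((j : ℕ) - s) * Real.sqrt (w ^ 2 + x ^ 2)}) ∧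
    (∃ v : Fin (m+1) → ℝ, v ≠ 0 ∧
        M.mulVec v = (-s * (w + Real.sqrt (w ^ 2 + x ^ 2))) • v) ∧
    (∀ (μ : ℝ) (v : Fin (m+1) → ℝ), v ≠ 0 → M.mulVec v = μ • v →
        -s * (w + Real.sqrt (w ^ 2 + x ^ 2)) ≤ μ) := by
  intro M s
  have hM : M = dickeM m w x := rfl
  have hs : s = (m : ℝ) / 2 := rfl
  have hnn : (0:ℝ) ≤ w^2 + x^2 := by positivity
  set r := Real.sqrt (w^2 + x^2) with hrdef
  have hr0 : 0 ≤ r := Real.sqrt_nonneg _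
  have hr2 : r^2 = w^2 + x^2 := Real.sq_sqrt hnn
  have key : {μ : ℝ | ∃ v : Fin (m+1) → ℝ, v ≠ 0 ∧ M.mulVec v = μ • v}
      = {μ : ℝ | ∃ j : Fin (m+1), μ = -s * w + ((j : ℕ) - s) * r} := by
    by_cases hrz : r = 0
    · have hx2 : w^2 + x^2 = 0 := by rw [← hr2, hrz]; ring
      have hw : w = 0 := by nlinarith [sq_nonneg w, sq_nonneg x]
      have hx : x = 0 := by nlinarith [sq_nonneg w, sq_nonneg x]
      have hM0 : ∀ v : Fin (m+1) → ℝ, M.mulVec v = 0 := by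
        intro v
        funext i
        show ∑ j, M i j * v j = 0
        apply Finset.sum_eq_zero
        intro j _
        have : M i j = 0 := by
          simp only [hM, dickeM, Matrix.of_apply]
          split_ifs <;> simp [hw, hx]
        rw [this, zero_mul]
      ext μ
      simp only [Set.mem_setOf_eq]
      constructor
      · rintro ⟨v, hv0, hveq⟩
        obtain ⟨i, hi⟩ := Function.ne_iff.1 hv0
        rw [hM0 v] at hveq
        have hμ0 : μ = 0 := by
          have := congr_fun hveq i
          simp only [Pi.zero_apply, Pi.smul_apply, smul_eq_mul] at this
          rcases mul_eq_zero.1 this.symm with h | h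
          · exact h
          · exact absurd h hi
        exact ⟨0, by rw [hμ0, hrz, hw]; ring⟩
      · rintro ⟨j, rfl⟩
        refine ⟨fun _ => 1, ?_, ?_⟩
        · intro h
          have := congr_fun h 0
          simp at this
        · rw [hM0, hrz, hw]
          rw [show -s * 0 + ((j:ℕ) - s) * 0 = 0 by ring, zero_smul]
      -- end r = 0 case
    · have hrpos : 0 < r := lt_of_le_of_ne hr0 (Ne.symm hrz)
      set lamp := (r - w)/2 with hlamp
      set lamm := (-w - r)/2 with hlamm
      obtain ⟨a, b, hab, hp1, hp2, hm1, hm2⟩ :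
          ∃ a b : ℝ, (a ≠ 0 ∨ b ≠ 0) ∧ (-(x/2) * b = lamp * a) ∧ (-w * b - (x/2) * a = lamp * b)
            ∧ (-(x/2) * a = lamm * (-b)) ∧ (-w * a - (x/2) * (-b) = lamm * a) := by
        by_cases hw : 0 ≤ w
        · refine ⟨w + r, -x, Or.inl (by positivity), ?_, ?_, ?_, ?_⟩
          · rw [hlamp]; linear_combination (-(1:ℝ)/2) * hr2
          · rw [hlamp]; ring
          · rw [hlamm]; ring
          · rw [hlamm]; linear_combination ((1:ℝ)/2) * hr2
        · refine ⟨x, w - r, Or.inr (by nlinarith), ?_, ?_, ?_, ?_⟩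
          · rw [hlamp]; ring
          · rw [hlamp]; linear_combination ((1:ℝ)/2) * hr2
          · rw [hlamm]; linear_combination ((1:ℝ)/2) * hr2
          · rw [hlamm]; ring
      have exist : ∀ j : Fin (m+1), ∃ v : Fin (m+1) → ℝ, v ≠ 0 ∧
          M.mulVec v = (-s * w + ((j:ℕ) - s) * r) • v := by
        intro j
        obtain ⟨p, hp0, hpd, hpe⟩ := dicke_poly m w x lamp lamm a b hab hp1 hp2 hm1 hm2
          (j : ℕ) (by omega)
        have hcast : ((m - (j:ℕ) : ℕ) : ℝ) = (m:ℝ) - ((j:ℕ):ℝ) := by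
          have hjm : (j:ℕ) ≤ m := by omega
          exact Nat.cast_sub hjm
        have hμ : ((j:ℕ):ℝ) * lamp + ((m - (j:ℕ) : ℕ) : ℝ) * lamm
            = -s * w + (((j:ℕ):ℝ) - s) * r := by
          rw [hcast, hlamp, hlamm, hs]
          ring
        rw [← hμ, hM]
        exact dicke_eigen_exists m w x _ p hp0 hpd hpe
      ext μ
      simp only [Set.mem_setOf_eq]
      constructor
      · rintro ⟨v, hv0, hveq⟩
        by_contra hno
        push_neg at hno
        choose vs hvs0 hvseq using exist
        set f : Module.End ℝ (Fin (m+1) → ℝ) := Matrix.toLin' (dickeM m w x) with hf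
        set μs : Fin (m+2) → ℝ := Fin.snoc (fun j : Fin (m+1) => -s * w + ((j:ℕ) - s) * r) μ with hμs
        set xs : Fin (m+2) → (Fin (m+1) → ℝ) := Fin.snoc vs v with hxs
        have hvalinj : ∀ j1 j2 : Fin (m+1),
            -s * w + (((j1:ℕ):ℝ) - s) * r = -s * w + (((j2:ℕ):ℝ) - s) * r → j1 = j2 := by
          intro j1 j2 h
          have h2 : ((j1:ℕ):ℝ) * r = ((j2:ℕ):ℝ) * r := by linear_combination h
          have h3 : ((j1:ℕ):ℝ) = ((j2:ℕ):ℝ) := mul_right_cancel₀ hrz h2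
          exact Fin.ext (by exact_mod_cast h3)
        have hinj : Function.Injective μs := by
          intro i1 i2 h
          induction i1 using Fin.lastCases with
          | last =>
            induction i2 using Fin.lastCases with
            | last => rfl
            | cast j2 =>
              rw [hμs] at h
              simp only [Fin.snoc_last, Fin.snoc_castSucc] at h
              exact absurd h (hno j2)
          | cast j1 =>
            induction i2 using Fin.lastCases with
            | last =>
              rw [hμs] at h
              simp only [Fin.snoc_last, Fin.snoc_castSucc] at h
              exact absurd h.symm (hno j1)
            | cast j2 =>
              rw [hμs] at h
              simp only [Fin.snoc_castSucc] at h
              exact congrArg Fin.castSucc (hvalinj j1 j2 h)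
        have heig : ∀ i, f.HasEigenvector (μs i) (xs i) := by
          intro i
          induction i using Fin.lastCases with
          | last =>
            refine ⟨Module.End.mem_eigenspace_iff.2 ?_, ?_⟩
            · rw [hμs, hxs]
              simp only [Fin.snoc_last]
              rw [hf]
              show (dickeM m w x).mulVec v = μ • v
              rw [← hM]
              exact hveq
            · rw [hxs]; simp only [Fin.snoc_last]; exact hv0
          | cast j =>
            refine ⟨Module.End.mem_eigenspace_iff.2 ?_, ?_⟩
            · rw [hμs, hxs]
              simp only [Fin.snoc_castSucc]
              rw [hf]
              show (dickeM m w x).mulVec (vs j) = _ • vs j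
              rw [← hM]
              exact hvseq j
            · rw [hxs]; simp only [Fin.snoc_castSucc]; exact hvs0 j
        have hli := Module.End.eigenvectors_linearIndependent' f μs hinj xs heig
        have hcard := hli.fintype_card_le_finrank
        rw [Module.finrank_fintype_fun_eq_card] at hcard
        simp only [Fintype.card_fin] at hcard
        omega
      · rintro ⟨j, rfl⟩
        exact exist j
  refine ⟨key, ?_, ?_⟩
  · have hmem : (-s * (w + r)) ∈ {μ : ℝ | ∃ j : Fin (m+1), μ = -s * w + ((j : ℕ) - s) * r} := by
      refine ⟨0, ?_⟩
      show -s * (w + r) = -s * w + (((0 : Fin (m+1)):ℕ) - s) * r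
      norm_num
      ring
    rw [← key] at hmem
    exact hmem
  · intro μ v hv0 hveq
    have hmem : μ ∈ {μ : ℝ | ∃ v : Fin (m+1) → ℝ, v ≠ 0 ∧ M.mulVec v = μ • v} := ⟨v, hv0, hveq⟩
    rw [key] at hmem
    obtain ⟨j, rfl⟩ := hmem
    have h1 : (0:ℝ) ≤ ((j:ℕ):ℝ) * r := by positivity
    have h2 : -s * w + (((j:ℕ):ℝ) - s) * r - (-s * (w + r)) = ((j:ℕ):ℝ) * r := by ring
    linarith
end

section
/- Let α > 0 with α < 2 and define x_c = 4α/(4 - α²). Consider, for x > 0 and jxx = α·x, the quantities β₀(x) = -(1/2)(w_eff(x) + √(w_eff(x)² + n_c x²)) with w_eff(x) = 1 - ((n_c-1)/4)·α·x, and θ(x) = -(1 + (α x)/4). Then β₀ and θ are equal when the two-level ground energy of the clique same-sign block crosses the spin-0 energy; specifically, solving β₀(x_c) = θ(x_c) for the effective weight-independent form gives x_c = 4α/(4-α²), and x_c ≤ Γ₂ holds if and only if α ≤ (-2 + 2√(1 + Γ₂²))/Γ₂. -/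
/-- Crossover point of the single-clique same-sign ground energy and the spin-0 energy:
with `jxx = α·x`, `w_eff(x) = 1 - ((n_c-1)/4)·α·x`,
`β₀(x) = -(1/2)(w_eff(x) + √(w_eff(x)² + n_c x²))` and `θ(x) = -(1 + αx/4)`, the two
energies cross at `x_c = 4α/(4-α²)`, and `x_c ≤ Γ₂` iff `α ≤ (-2 + 2√(1+Γ₂²))/Γ₂`. -/
theorem crossover_point (α : ℝ) (hα0 : 0 < α) (hα2 : α < 2)
    (nc : ℝ) (hnc : 2 ≤ nc) (Γ₂ : ℝ) (hΓ : 0 < Γ₂) :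
    let xc : ℝ := 4 * α / (4 - α ^ 2)
    let weff : ℝ → ℝ := fun x => 1 - ((nc - 1) / 4) * (α * x)
    let β₀ : ℝ → ℝ := fun x =>
      -(1/2) * (weff x + Real.sqrt ((weff x) ^ 2 + nc * x ^ 2))
    let θ : ℝ → ℝ := fun x => -(1 + α * x / 4)
    β₀ xc = θ xc ∧
    (xc ≤ Γ₂ ↔ α ≤ (-2 + 2 * Real.sqrt (1 + Γ₂ ^ 2)) / Γ₂) := by
  intro xc weff β₀ θ
  have hden : 0 < 4 - α ^ 2 := by nlinarith
  have hden' : (4 - α ^ 2) ≠ 0 := ne_of_gt hden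
  have hxc : 0 < xc := div_pos (by linarith) hden
  constructor
  · -- equality of energies
    show -(1/2) * (weff xc + Real.sqrt ((weff xc) ^ 2 + nc * xc ^ 2)) = -(1 + α * xc / 4)
    have hB : (0:ℝ) ≤ 1 + (nc + 1) * α * xc / 4 := by
      nlinarith [mul_pos (mul_pos (show (0:ℝ) < nc + 1 by linarith) hα0) hxc]
    have hkey : (weff xc) ^ 2 + nc * xc ^ 2 = (1 + (nc + 1) * α * xc / 4) ^ 2 := by
      show (1 - ((nc - 1) / 4) * (α * xc)) ^ 2 + nc * xc ^ 2 = _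
      show (1 - ((nc - 1) / 4) * (α * (4 * α / (4 - α ^ 2)))) ^ 2
          + nc * (4 * α / (4 - α ^ 2)) ^ 2
          = (1 + (nc + 1) * α * (4 * α / (4 - α ^ 2)) / 4) ^ 2
      field_simp
      ring
    rw [hkey, Real.sqrt_sq hB]
    show -(1/2) * ((1 - ((nc - 1) / 4) * (α * xc)) + (1 + (nc + 1) * α * xc / 4))
        = -(1 + α * xc / 4)
    ring
  · -- the iff
    have hs : Real.sqrt (1 + Γ₂ ^ 2) ^ 2 = 1 + Γ₂ ^ 2 :=
      Real.sq_sqrt (by positivity)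
    have h1 : xc ≤ Γ₂ ↔ 4 * α ≤ Γ₂ * (4 - α ^ 2) := div_le_iff₀ hden
    have h2 : α ≤ (-2 + 2 * Real.sqrt (1 + Γ₂ ^ 2)) / Γ₂ ↔
        α * Γ₂ + 2 ≤ 2 * Real.sqrt (1 + Γ₂ ^ 2) := by
      rw [le_div_iff₀ hΓ]
      constructor <;> intro h <;> nlinarith
    rw [h1, h2]
    have hsq : α * Γ₂ + 2 ≤ 2 * Real.sqrt (1 + Γ₂ ^ 2) ↔
        (α * Γ₂ + 2) ^ 2 ≤ (2 * Real.sqrt (1 + Γ₂ ^ 2)) ^ 2 := by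
      constructor
      · intro h; have h0 : (0:ℝ) ≤ α * Γ₂ + 2 := by positivity
        nlinarith
      · intro h
        have h0 : (0:ℝ) ≤ 2 * Real.sqrt (1 + Γ₂ ^ 2) := by positivity
        nlinarith [sq_nonneg (α * Γ₂ + 2 - 2 * Real.sqrt (1 + Γ₂ ^ 2))]
    rw [hsq]
    constructor <;> intro h <;> nlinarith
end
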